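/- arXiv:2402.03846 — 12 statements merged into one kernel-verified Lean document; each statement's English description precedes it below -/
import Mathlib

section
/- (Hidden outlier existence.) Let E be a real normed vector space, A and B closed subsets of E, x ∈ A and y ∉ A, and set α(t) = x + t•(y − x). Let T = sSup {t ∈ [0,1] : α(t) ∈ A} and z = α(T). If z ∉ frontier B, then there exists a point z' on the segment from x to y such that z' ∈ (A \ B) ∪ (B \ A), i.e., z' lies in the hidden region. -/
theorem hidden_outlier_existence {E : Type*} [NormedAddCommGroup E] [NormedSpace ℝ E]
    (A B : Set E) (hA : IsClosed A) (hB : IsClosed B) (x y : E)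
    (hx : x ∈ A) (hy : y ∉ A)
    (T : ℝ) (hT : T = sSup {t ∈ Set.Icc (0:ℝ) 1 | x + t • (y - x) ∈ A})
    (hz : x + T • (y - x) ∉ frontier B) :
    ∃ t ∈ Set.Icc (0:ℝ) 1, x + t • (y - x) ∈ (A \ B) ∪ (B \ A) := by
  set S : Set ℝ := {t ∈ Set.Icc (0:ℝ) 1 | x + t • (y - x) ∈ A} with hS
  have hcont : Continuous fun t : ℝ => x + t • (y - x) := by continuity
  have h0 : (0:ℝ) ∈ S := by simp [hS, hx]
  have hne : S.Nonempty := ⟨0, h0⟩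
  have hbdd : BddAbove S := ⟨1, fun t ht => ht.1.2⟩
  have hT0 : 0 ≤ T := hT ▸ le_csSup hbdd h0
  have hT1 : T ≤ 1 := hT ▸ csSup_le hne (fun t ht => ht.1.2)
  have hTcl : T ∈ closure S := hT ▸ csSup_mem_closure hne hbdd
  have hzA : x + T • (y - x) ∈ A := by
    have hsub : S ⊆ (fun t : ℝ => x + t • (y - x)) ⁻¹' A := fun t ht => ht.2
    have : closure S ⊆ (fun t : ℝ => x + t • (y - x)) ⁻¹' A :=
      closure_minimal hsub (hA.preimage hcont)
    exact this hTcl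
  have hfr : frontier B = B \ interior B := by
    rw [frontier, hB.closure_eq]
  rcases Classical.em (x + T • (y - x) ∈ B) with hzB | hzB
  · -- z ∈ B, so since z ∉ frontier B, z ∈ interior B
    have hzint : x + T • (y - x) ∈ interior B := by
      by_contra h
      exact hz (hfr ▸ ⟨hzB, h⟩)
    have hTlt1 : T < 1 := by
      rcases lt_or_eq_of_le hT1 with h | h
      · exact h
      · exfalso
        apply hy
        have : x + (1:ℝ) • (y - x) = y := by
          rw [one_smul]; abel
        rw [h] at hzA
        rwa [this] at hzA
    have hU : IsOpen ((fun t : ℝ => x + t • (y - x)) ⁻¹' interior B) :=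
      isOpen_interior.preimage hcont
    rcases Metric.isOpen_iff.mp hU T hzint with ⟨ε, hε, hball⟩
    set t := min (T + ε/2) ((T + 1)/2) with ht
    have hTt : T < t := lt_min (by linarith) (by linarith)
    have ht1 : t < 1 := min_lt_of_right_lt (by linarith)
    have htball : t ∈ Metric.ball T ε := by
      rw [Real.ball_eq_Ioo]
      constructor
      · linarith
      · calc t ≤ T + ε/2 := min_le_left _ _
          _ < T + ε := by linarith
    have htB : x + t • (y - x) ∈ interior B := hball htball
    have htA : x + t • (y - x) ∉ A := by
      intro hmem
      have : t ∈ S := ⟨⟨by linarith, le_of_lt ht1⟩, hmem⟩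
      have : t ≤ T := hT ▸ le_csSup hbdd this
      linarith
    exact ⟨t, ⟨by linarith, le_of_lt ht1⟩, Or.inr ⟨interior_subset htB, htA⟩⟩
  · exact ⟨T, ⟨hT0, hT1⟩, Or.inl ⟨hzA, hzB⟩⟩
end

section
/- Let E be a real normed vector space, A and B closed subsets of E, x ∈ A and y ∉ A, and set α(t) = x + t•(y − x). Let T = sSup {t ∈ [0,1] : α(t) ∈ A}. If α(T) ∈ interior B, then there exists a point z' on the segment from x to y with z' ∈ B \ A. -/
theorem hidden_outlier_in_H2 {E : Type*} [NormedAddCommGroup E] [NormedSpace ℝ E]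
    (A B : Set E) (hA : IsClosed A) (hB : IsClosed B) (x y : E)
    (hx : x ∈ A) (hy : y ∉ A)
    (T : ℝ) (hT : T = sSup {t ∈ Set.Icc (0:ℝ) 1 | x + t • (y - x) ∈ A})
    (hz : x + T • (y - x) ∈ interior B) :
    ∃ t ∈ Set.Icc (0:ℝ) 1, x + t • (y - x) ∈ B \ A := by
  set f : ℝ → E := fun t => x + t • (y - x) with hf
  have hfc : Continuous f := by continuity
  set S : Set ℝ := {t ∈ Set.Icc (0:ℝ) 1 | x + t • (y - x) ∈ A} with hS
  have hSc : IsClosed S := by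
    have hEq : S = Set.Icc (0:ℝ) 1 ∩ f ⁻¹' A := by
      ext t; simp [hS, hf]
    rw [hEq]; exact isClosed_Icc.inter (hA.preimage hfc)
  have hS0 : (0:ℝ) ∈ S := by simp [hS, hx]
  have hSb : BddAbove S := ⟨1, fun t ht => ht.1.2⟩
  have hTS : T ∈ S := hT ▸ hSc.csSup_mem ⟨0, hS0⟩ hSb
  have hT01 : T ∈ Set.Icc (0:ℝ) 1 := hTS.1
  have hTA : x + T • (y - x) ∈ A := hTS.2
  have hT1 : T < 1 := by
    rcases lt_or_eq_of_le hT01.2 with h | h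
    · exact h
    · exfalso; apply hy; simpa [h] using hTA
  have hmem : f ⁻¹' interior B ∈ nhds T :=
    hfc.continuousAt.preimage_mem_nhds (isOpen_interior.mem_nhds hz)
  rcases Metric.mem_nhds_iff.1 hmem with ⟨ε, hε, hball⟩
  set t := min 1 (T + ε / 2) with ht'
  have htT : T < t := lt_min hT1 (by linarith)
  have ht1 : t ≤ 1 := min_le_left _ _
  have ht0 : 0 ≤ t := le_trans hT01.1 htT.le
  have htle : t ≤ T + ε / 2 := min_le_right _ _
  have htB : f t ∈ interior B := by
    apply hball
    simp only [Metric.mem_ball, Real.dist_eq, abs_lt]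
    constructor <;> linarith
  have htA : x + t • (y - x) ∉ A := by
    intro hmemA
    have : t ∈ S := ⟨⟨ht0, ht1⟩, hmemA⟩
    have : t ≤ T := hT ▸ le_csSup hSb this
    linarith
  exact ⟨t, ⟨ht0, ht1⟩, interior_subset htB, htA⟩
end

section
/- Let E be a real normed vector space, A and B closed subsets of E, x ∈ B and y ∉ B, and set α(t) = x + t•(y − x). Let T = sSup {t ∈ [0,1] : α(t) ∈ B}. If α(T) ∈ interior A, then there exists a point w on the segment from x to y with w ∈ A \ B. -/
theorem hidden_outlier_in_H1 {E : Type*} [NormedAddCommGroup E] [NormedSpace ℝ E]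
    (A B : Set E) (hA : IsClosed A) (hB : IsClosed B) (x y : E)
    (hx : x ∈ B) (hy : y ∉ B)
    (T : ℝ) (hT : T = sSup {t ∈ Set.Icc (0:ℝ) 1 | x + t • (y - x) ∈ B})
    (hz : x + T • (y - x) ∈ interior A) :
    ∃ t ∈ Set.Icc (0:ℝ) 1, x + t • (y - x) ∈ A \ B := by
  set S : Set ℝ := {t ∈ Set.Icc (0:ℝ) 1 | x + t • (y - x) ∈ B} with hS
  have hcont : Continuous fun t : ℝ => x + t • (y - x) :=
    continuous_const.add (continuous_id.smul continuous_const)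
  have hS0 : (0:ℝ) ∈ S := by
    constructor
    · exact Set.mem_Icc.2 ⟨le_refl 0, zero_le_one⟩
    · simpa using hx
  have hSne : S.Nonempty := ⟨0, hS0⟩
  have hSbdd : BddAbove S := ⟨1, fun t ht => ht.1.2⟩
  have hSclosed : IsClosed S := by
    have : S = Set.Icc (0:ℝ) 1 ∩ (fun t : ℝ => x + t • (y - x)) ⁻¹' B := rfl
    rw [this]
    exact isClosed_Icc.inter (hB.preimage hcont)
  have hTS : T ∈ S := hT ▸ hSclosed.csSup_mem hSne hSbdd
  have hT0 : 0 ≤ T := hTS.1.1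
  have hT1 : T ≤ 1 := hTS.1.2
  have hTlt : T < 1 := by
    rcases lt_or_eq_of_le hT1 with h | h
    · exact h
    · exfalso; apply hy
      have := hTS.2
      rw [h] at this
      simpa using this
  -- preimage of interior A is open and contains T
  have hU : IsOpen ((fun t : ℝ => x + t • (y - x)) ⁻¹' interior A) :=
    isOpen_interior.preimage hcont
  have hTU : T ∈ (fun t : ℝ => x + t • (y - x)) ⁻¹' interior A := hz
  obtain ⟨δ, hδpos, hball⟩ := Metric.isOpen_iff.1 hU T hTU
  set t := min 1 (T + δ / 2) with ht
  have htgtT : T < t := lt_min hTlt (by linarith)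
  have htle1 : t ≤ 1 := min_le_left _ _
  have ht0 : 0 ≤ t := le_trans hT0 htgtT.le
  have htball : t ∈ Metric.ball T δ := by
    rw [Metric.mem_ball, Real.dist_eq, abs_of_nonneg (by linarith)]
    have : t ≤ T + δ / 2 := min_le_right _ _
    linarith
  have htA : x + t • (y - x) ∈ interior A := hball htball
  refine ⟨t, Set.mem_Icc.2 ⟨ht0, htle1⟩, interior_subset htA, ?_⟩
  intro htB
  have htS : t ∈ S := ⟨Set.mem_Icc.2 ⟨ht0, htle1⟩, htB⟩
  have : t ≤ T := hT ▸ le_csSup hSbdd htS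
  linarith
end

section
/- Let E be a real normed vector space and B ⊆ E a closed subset. If x ∈ B, y ∈ B, and some point z of the segment from x to y satisfies z ∉ B, then there exist two distinct points w₁ ≠ w₂ on the segment from x to y with w₁ ∈ frontier B and w₂ ∈ frontier B. -/
open Set Filter Topology

lemma frontier_mem_of_right {E : Type*} [TopologicalSpace E]
    (B : Set E) (f : ℝ → E) (hf : Continuous f) {c d : ℝ} (hcd : c < d)
    (hc : f c ∈ B) (h : ∀ t ∈ Set.Ioc c d, f t ∉ B) : f c ∈ frontier B := by
  rw [frontier_eq_closure_inter_closure]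
  refine ⟨subset_closure hc, ?_⟩
  have hne : (𝓝[Set.Ioc c d] c).NeBot := left_nhdsWithin_Ioc_neBot hcd
  have htend : Tendsto f (𝓝[Set.Ioc c d] c) (𝓝 (f c)) :=
    (hf.tendsto c).mono_left nhdsWithin_le_nhds
  exact mem_closure_of_tendsto htend (eventually_mem_nhdsWithin.mono fun t ht => h t ht)

lemma frontier_mem_of_left {E : Type*} [TopologicalSpace E]
    (B : Set E) (f : ℝ → E) (hf : Continuous f) {c d : ℝ} (hcd : c < d)
    (hd : f d ∈ B) (h : ∀ t ∈ Set.Ico c d, f t ∉ B) : f d ∈ frontier B := by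
  rw [frontier_eq_closure_inter_closure]
  refine ⟨subset_closure hd, ?_⟩
  have hne : (𝓝[Set.Ico c d] d).NeBot := right_nhdsWithin_Ico_neBot hcd
  have htend : Tendsto f (𝓝[Set.Ico c d] d) (𝓝 (f d)) :=
    (hf.tendsto d).mono_left nhdsWithin_le_nhds
  exact mem_closure_of_tendsto htend (eventually_mem_nhdsWithin.mono fun t ht => h t ht)

theorem two_frontier_points {E : Type*} [NormedAddCommGroup E] [NormedSpace ℝ E]
    (B : Set E) (hB : IsClosed B) (x y : E) (hx : x ∈ B) (hy : y ∈ B)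
    (hz : ∃ t ∈ Set.Icc (0:ℝ) 1, x + t • (y - x) ∉ B) :
    ∃ w₁ ∈ (fun t : ℝ => x + t • (y - x)) '' Set.Icc (0:ℝ) 1,
      ∃ w₂ ∈ (fun t : ℝ => x + t • (y - x)) '' Set.Icc (0:ℝ) 1,
        w₁ ≠ w₂ ∧ w₁ ∈ frontier B ∧ w₂ ∈ frontier B := by
  obtain ⟨t₀, ht₀, ht₀B⟩ := hz
  set f : ℝ → E := fun t => x + t • (y - x) with hfdef
  have hf : Continuous f := by continuity
  have hf0 : f 0 = x := by simp [hfdef]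
  have hf1 : f 1 = y := by simp [hfdef]
  have hyx : y - x ≠ 0 := by
    intro h
    exact ht₀B (by simp [hfdef, h, hx])
  have hinj : Function.Injective f := by
    intro a b hab
    have h1 : a • (y - x) = b • (y - x) := by
      have := hab
      simp only [hfdef, add_right_inj] at this
      exact this
    have h2 : (a - b) • (y - x) = 0 := by rw [sub_smul, h1, sub_self]
    rcases smul_eq_zero.1 h2 with h | h
    · linarith [sub_eq_zero.1 h]
    · exact absurd h hyx
  -- left frontier point
  set S : Set ℝ := Set.Icc 0 t₀ ∩ f ⁻¹' B with hS
  have hSne : S.Nonempty := ⟨0, ⟨le_refl 0, ht₀.1⟩, by simpa [hf0] using hx⟩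
  have hSbdd : BddAbove S := ⟨t₀, fun t ht => ht.1.2⟩
  have hSclosed : IsClosed S := isClosed_Icc.inter (hB.preimage hf)
  set a := sSup S with ha
  have haS : a ∈ S := hSclosed.csSup_mem hSne hSbdd
  have haB : f a ∈ B := haS.2
  have ha_le : a ≤ t₀ := haS.1.2
  have ha_lt : a < t₀ := lt_of_le_of_ne ha_le (fun h => ht₀B (h ▸ haB))
  have ha0 : 0 ≤ a := haS.1.1
  have hafr : f a ∈ frontier B := by
    refine frontier_mem_of_right B f hf ha_lt haB fun t ht htB => ?_
    have : t ∈ S := ⟨⟨ha0.trans ht.1.le, ht.2⟩, htB⟩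
    exact absurd (le_csSup hSbdd this) (not_le.2 ht.1)
  -- right frontier point
  set T : Set ℝ := Set.Icc t₀ 1 ∩ f ⁻¹' B with hT
  have hTne : T.Nonempty := ⟨1, ⟨ht₀.2, le_refl 1⟩, by simpa [hf1] using hy⟩
  have hTbdd : BddBelow T := ⟨t₀, fun t ht => ht.1.1⟩
  have hTclosed : IsClosed T := isClosed_Icc.inter (hB.preimage hf)
  set b := sInf T with hb
  have hbT : b ∈ T := hTclosed.csInf_mem hTne hTbdd
  have hbB : f b ∈ B := hbT.2
  have hb_ge : t₀ ≤ b := hbT.1.1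
  have hb_gt : t₀ < b := lt_of_le_of_ne hb_ge (fun h => ht₀B (h ▸ hbB))
  have hb1 : b ≤ 1 := hbT.1.2
  have hbfr : f b ∈ frontier B := by
    refine frontier_mem_of_left B f hf hb_gt hbB fun t ht htB => ?_
    have : t ∈ T := ⟨⟨ht.1, ht.2.le.trans hb1⟩, htB⟩
    exact absurd (csInf_le hTbdd this) (not_le.2 ht.2)
  refine ⟨f a, ⟨a, ⟨ha0, ha_le.trans ht₀.2⟩, rfl⟩, f b, ⟨b, ⟨ht₀.1.trans hb_ge, hb1⟩, rfl⟩,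
    fun h => ?_, hafr, hbfr⟩
  have := hinj h
  linarith [ha_lt, hb_gt]
end

section
/- Let E be a real normed vector space, A and B closed subsets of E, and α(t) = x + t•(y − x). Assume x ∈ A ∩ B, y ∉ A, y ∈ B, and that there is s ∈ [0,1] such that the intersection of frontier A with the segment [x,y] equals the singleton {α(s)}, while frontier B is disjoint from the segment [x,y]. Then for every t ∈ [0,1]: if t ≤ s then α(t) ∈ A ∩ B, and if t > s then α(t) ∈ B \ A. -/
open Set

lemma crossing_frontier {E : Type*} [TopologicalSpace E] {A : Set E} (hA : IsClosed A)
    {f : ℝ → E} (hf : Continuous f) {a b : ℝ} (hab : a ≤ b)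
    (ha : f a ∈ A) (hb : f b ∉ A) : ∃ u ∈ Set.Icc a b, f u ∈ frontier A := by
  set K := Set.Icc a b ∩ f ⁻¹' A with hK
  have hKc : IsClosed K := isClosed_Icc.inter (hA.preimage hf)
  have hKne : K.Nonempty := ⟨a, ⟨le_refl a, hab⟩, ha⟩
  have hKbdd : BddAbove K := ⟨b, fun t ht => ht.1.2⟩
  have huK : sSup K ∈ K := hKc.csSup_mem hKne hKbdd
  set u := sSup K with hu
  have hub : u < b := lt_of_le_of_ne huK.1.2 (fun h => hb (h ▸ huK.2))
  refine ⟨u, huK.1, ?_⟩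
  rw [frontier_eq_closure_inter_closure]
  refine ⟨subset_closure huK.2, ?_⟩
  have h1 : u ∈ closure (Set.Ioc u b) := by
    rw [closure_Ioc hub.ne]; exact ⟨le_refl u, hub.le⟩
  have h2 : f u ∈ closure (f '' Set.Ioc u b) :=
    image_closure_subset_closure_image hf ⟨u, h1, rfl⟩
  refine closure_mono ?_ h2
  rintro _ ⟨t, ht, rfl⟩
  intro hfA
  have htK : t ∈ K := ⟨⟨huK.1.1.trans ht.1.le, ht.2⟩, hfA⟩
  exact absurd (le_csSup hKbdd htK) (not_le.mpr ht.1)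

theorem case_I1a {E : Type*} [NormedAddCommGroup E] [NormedSpace ℝ E]
    (A B : Set E) (hA : IsClosed A) (hB : IsClosed B) (x y : E)
    (hxA : x ∈ A) (hxB : x ∈ B) (hyA : y ∉ A) (hyB : y ∈ B)
    (s : ℝ) (hs : s ∈ Set.Icc (0:ℝ) 1)
    (hfrA : frontier A ∩ (fun t : ℝ => x + t • (y - x)) '' Set.Icc (0:ℝ) 1
      = {x + s • (y - x)})
    (hfrB : frontier B ∩ (fun t : ℝ => x + t • (y - x)) '' Set.Icc (0:ℝ) 1 = ∅) :
    ∀ t ∈ Set.Icc (0:ℝ) 1,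
      (t ≤ s → x + t • (y - x) ∈ A ∩ B) ∧ (s < t → x + t • (y - x) ∈ B \ A) := by
  set α : ℝ → E := fun t => x + t • (y - x) with hα
  have hcont : Continuous α := continuous_const.add (continuous_id.smul continuous_const)
  have hxy : y ≠ x := fun h => hyA (h ▸ hxA)
  have hinj : ∀ u v : ℝ, α u = α v → u = v := by
    intro u v h
    have : (u - v) • (y - x) = 0 := by
      simp only [hα] at h
      rw [sub_smul]
      have := add_left_cancel h
      rw [this, sub_self]
    rcases smul_eq_zero.mp this with h' | h'
    · linarith [sub_eq_zero.mp h']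
    · exact absurd (sub_eq_zero.mp h') hxy
  have hα0 : α 0 = x := by simp [hα]
  have hα1 : α 1 = y := by simp [hα]
  intro t ht
  -- B part: α t ∈ B for all t ∈ [0,1]
  have hBmem : α t ∈ B := by
    by_contra hnB
    obtain ⟨u, hu, hufr⟩ := crossing_frontier hB hcont ht.1 (hα0 ▸ hxB) hnB
    have : α u ∈ frontier B ∩ α '' Set.Icc (0:ℝ) 1 :=
      ⟨hufr, ⟨u, ⟨hu.1, hu.2.trans ht.2⟩, rfl⟩⟩
    rw [hfrB] at this
    exact this
  constructor
  · intro hts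
    refine ⟨?_, hBmem⟩
    by_contra hnA
    obtain ⟨u, hu, hufr⟩ := crossing_frontier hA hcont ht.1 (hα0 ▸ hxA) hnA
    have hmem : α u ∈ frontier A ∩ α '' Set.Icc (0:ℝ) 1 :=
      ⟨hufr, ⟨u, ⟨hu.1, hu.2.trans ht.2⟩, rfl⟩⟩
    rw [hfrA] at hmem
    have hus : u = s := hinj u s hmem
    have : t = s := le_antisymm hts (hus ▸ hu.2)
    have hsA : α s ∈ A := hA.frontier_subset (hus ▸ hufr)
    exact hnA (this ▸ hsA)
  · intro hst
    refine ⟨hBmem, ?_⟩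
    intro hnA
    obtain ⟨u, hu, hufr⟩ := crossing_frontier hA hcont ht.2 hnA (hα1 ▸ hyA)
    have hmem : α u ∈ frontier A ∩ α '' Set.Icc (0:ℝ) 1 :=
      ⟨hufr, ⟨u, ⟨ht.1.trans hu.1, hu.2⟩, rfl⟩⟩
    rw [hfrA] at hmem
    have hus : u = s := hinj u s hmem
    linarith [hu.1]
end

section
/- Let E be a real normed vector space, A and B closed subsets of E, and α(t) = x + t•(y − x). Assume x ∈ A ∩ B, y ∉ A, y ∉ B, and that there are s, s' ∈ [0,1] such that frontier A intersected with the segment [x,y] equals {α(s)}, frontier B intersected with the segment [x,y] equals {α(s')}, and α(s) ∈ interior B. Then s < s', and for every t ∈ [0,1]: if t ≤ s then α(t) ∈ A ∩ B; if s < t ≤ s' then α(t) ∈ B \ A; and if t > s' then α(t) ∉ A and α(t) ∉ B. -/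
lemma seg_side_aux {E : Type*} [NormedAddCommGroup E] [NormedSpace ℝ E]
    (A : Set E) (hA : IsClosed A) (x y : E) (hxA : x ∈ A) (hyA : y ∉ A)
    (s : ℝ) (hs : s ∈ Set.Icc (0:ℝ) 1)
    (hfr : frontier A ∩ (fun t : ℝ => x + t • (y - x)) '' Set.Icc (0:ℝ) 1
      = {x + s • (y - x)}) :
    ∀ t ∈ Set.Icc (0:ℝ) 1,
      (t ≤ s → x + t • (y - x) ∈ A) ∧ (s < t → x + t • (y - x) ∉ A) := by
  have hv : y - x ≠ 0 := sub_ne_zero.mpr (fun h => hyA (h ▸ hxA))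
  set α : ℝ → E := fun t => x + t • (y - x) with hα
  have hcont : Continuous α := by
    apply Continuous.add continuous_const
    exact continuous_id.smul continuous_const
  have hinj : ∀ t u : ℝ, α t = α u → t = u := by
    intro t u h
    have h2 : t • (y - x) = u • (y - x) := by
      simpa [α] using h
    exact smul_left_injective ℝ hv h2
  have hfr' : ∀ t ∈ Set.Icc (0:ℝ) 1, α t ∈ frontier A → t = s := by
    intro t ht h
    have hmem : α t ∈ frontier A ∩ α '' Set.Icc (0:ℝ) 1 := ⟨h, ⟨t, ht, rfl⟩⟩
    rw [hfr] at hmem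
    exact hinj t s hmem
  have hsf : α s ∈ frontier A := by
    have : α s ∈ ({α s} : Set E) := rfl
    rw [← hfr] at this
    exact this.1
  have hu : IsOpen (α ⁻¹' interior A) := isOpen_interior.preimage hcont
  have hw : IsOpen (α ⁻¹' (closure A)ᶜ) := isClosed_closure.isOpen_compl.preimage hcont
  have hdisj : Disjoint (α ⁻¹' interior A) (α ⁻¹' (closure A)ᶜ) := by
    rw [Set.disjoint_left]
    intro r h1 h2
    exact h2 (interior_subset_closure h1)
  have hcov : ∀ t ∈ Set.Icc (0:ℝ) 1, t ≠ s →
      t ∈ α ⁻¹' interior A ∪ α ⁻¹' (closure A)ᶜ := by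
    intro t ht hts
    by_cases h : α t ∈ closure A
    · by_cases h2 : α t ∈ interior A
      · exact Or.inl h2
      · exact absurd (hfr' t ht ⟨h, h2⟩) hts
    · exact Or.inr h
  intro t ht
  constructor
  · intro hts
    rcases eq_or_lt_of_le hts with rfl | hlt
    · exact hA.frontier_subset hsf
    · have h0s : (0:ℝ) ≠ s := ne_of_lt (lt_of_le_of_lt ht.1 hlt)
      have hx0 : α 0 = x := by simp [α]
      have hxint : (0:ℝ) ∈ α ⁻¹' interior A := by
        rcases hcov 0 ⟨le_refl 0, zero_le_one⟩ h0s with h | h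
        · exact h
        · exact absurd (subset_closure (hx0 ▸ hxA)) h
      have hsub : Set.Icc (0:ℝ) t ⊆ α ⁻¹' interior A ∪ α ⁻¹' (closure A)ᶜ := by
        intro r hr
        exact hcov r ⟨hr.1, le_trans hr.2 ht.2⟩ (ne_of_lt (lt_of_le_of_lt hr.2 hlt))
      have hres := isPreconnected_Icc.subset_left_of_subset_union hu hw hdisj hsub
        ⟨0, ⟨le_refl 0, ht.1⟩, hxint⟩
      exact interior_subset (hres ⟨ht.1, le_refl t⟩)
  · intro hst hmem
    have h1s : (1:ℝ) ≠ s := fun h => absurd (h ▸ hst) (not_lt.mpr (h ▸ ht.2))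
    have hy1 : α 1 = y := by simp [α]
    have hyv : (1:ℝ) ∈ α ⁻¹' (closure A)ᶜ := by
      rcases hcov 1 ⟨zero_le_one, le_refl 1⟩ h1s with h | h
      · have hin : α 1 ∈ A := interior_subset h
        rw [hy1] at hin
        exact absurd hin hyA
      · exact h
    have hsub : Set.Icc t 1 ⊆ α ⁻¹' interior A ∪ α ⁻¹' (closure A)ᶜ := by
      intro r hr
      exact hcov r ⟨le_trans ht.1 hr.1, hr.2⟩ (ne_of_gt (lt_of_lt_of_le hst hr.1))
    have hres := isPreconnected_Icc.subset_left_of_subset_union hw hu hdisj.symm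
      (fun r hr => (hsub hr).symm) ⟨1, ⟨ht.2, le_refl 1⟩, hyv⟩
    exact (hres ⟨le_refl t, ht.2⟩) (subset_closure hmem)

theorem case_I1b {E : Type*} [NormedAddCommGroup E] [NormedSpace ℝ E]
    (A B : Set E) (hA : IsClosed A) (hB : IsClosed B) (x y : E)
    (hxA : x ∈ A) (hxB : x ∈ B) (hyA : y ∉ A) (hyB : y ∉ B)
    (s s' : ℝ) (hs : s ∈ Set.Icc (0:ℝ) 1) (hs' : s' ∈ Set.Icc (0:ℝ) 1)
    (hfrA : frontier A ∩ (fun t : ℝ => x + t • (y - x)) '' Set.Icc (0:ℝ) 1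
      = {x + s • (y - x)})
    (hfrB : frontier B ∩ (fun t : ℝ => x + t • (y - x)) '' Set.Icc (0:ℝ) 1
      = {x + s' • (y - x)})
    (hsB : x + s • (y - x) ∈ interior B) :
    s < s' ∧ ∀ t ∈ Set.Icc (0:ℝ) 1,
      (t ≤ s → x + t • (y - x) ∈ A ∩ B) ∧
      (s < t → t ≤ s' → x + t • (y - x) ∈ B \ A) ∧
      (s' < t → x + t • (y - x) ∉ A ∧ x + t • (y - x) ∉ B) := by
  have hAside := seg_side_aux A hA x y hxA hyA s hs hfrA
  have hBside := seg_side_aux B hB x y hxB hyB s' hs' hfrB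
  have hs'f : x + s' • (y - x) ∈ frontier B := by
    have : x + s' • (y - x) ∈ ({x + s' • (y - x)} : Set E) := rfl
    rw [← hfrB] at this
    exact this.1
  have hlt : s < s' := by
    by_contra h
    push_neg at h
    rcases eq_or_lt_of_le h with rfl | hlt
    · exact hs'f.2 hsB
    · exact (hBside s hs).2 hlt (interior_subset hsB)
  refine ⟨hlt, fun t ht => ⟨?_, ?_, ?_⟩⟩
  · intro h
    exact ⟨(hAside t ht).1 h, (hBside t ht).1 (le_of_lt (lt_of_le_of_lt h hlt))⟩
  · intro h1 h2
    exact ⟨(hBside t ht).1 h2, (hAside t ht).2 h1⟩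
  · intro h
    exact ⟨(hAside t ht).2 (lt_trans hlt h), (hBside t ht).2 h⟩
end

section
/- Let E be a real normed vector space, A and B closed subsets of E, and α(t) = x + t•(y − x). Assume x ∈ A ∩ B, y ∉ A, y ∉ B, and that there are s, s' ∈ [0,1] such that frontier A intersected with the segment [x,y] equals {α(s)}, frontier B intersected with the segment [x,y] equals {α(s')}, and α(s) ∉ B. Then s' < s, and for every t ∈ [0,1]: if t ≤ s' then α(t) ∈ A ∩ B; if s' < t ≤ s then α(t) ∈ A \ B; and if t > s then α(t) ∉ A and α(t) ∉ B. -/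
theorem case_I2b {E : Type*} [NormedAddCommGroup E] [NormedSpace ℝ E]
    (A B : Set E) (hA : IsClosed A) (hB : IsClosed B) (x y : E)
    (hxA : x ∈ A) (hxB : x ∈ B) (hyA : y ∉ A) (hyB : y ∉ B)
    (s s' : ℝ) (hs : s ∈ Set.Icc (0:ℝ) 1) (hs' : s' ∈ Set.Icc (0:ℝ) 1)
    (hfrA : frontier A ∩ (fun t : ℝ => x + t • (y - x)) '' Set.Icc (0:ℝ) 1
      = {x + s • (y - x)})
    (hfrB : frontier B ∩ (fun t : ℝ => x + t • (y - x)) '' Set.Icc (0:ℝ) 1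
      = {x + s' • (y - x)})
    (hsB : x + s • (y - x) ∉ B) :
    s' < s ∧ ∀ t ∈ Set.Icc (0:ℝ) 1,
      (t ≤ s' → x + t • (y - x) ∈ A ∩ B) ∧
      (s' < t → t ≤ s → x + t • (y - x) ∈ A \ B) ∧
      (s < t → x + t • (y - x) ∉ A ∧ x + t • (y - x) ∉ B) := by
  set α : ℝ → E := fun t => x + t • (y - x) with hαdef
  have hxy : y - x ≠ 0 := sub_ne_zero.mpr (fun h => hyA (h ▸ hxA))
  have hcont : Continuous α := by
    apply continuous_const.add
    exact continuous_id.smul continuous_const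
  have hinj : Function.Injective α := by
    intro a b hab
    simp only [α, add_right_inj] at hab
    have : (a - b) • (y - x) = 0 := by rw [sub_smul, hab, sub_self]
    rcases smul_eq_zero.mp this with h | h
    · linarith [sub_eq_zero.mp (by exact_mod_cast h)]
    · exact absurd h hxy
  have key : ∀ (C : Set E), IsClosed C → x ∈ C → y ∉ C →
      ∀ c, c ∈ Set.Icc (0:ℝ) 1 →
      frontier C ∩ α '' Set.Icc (0:ℝ) 1 = {α c} →
      ∀ t ∈ Set.Icc (0:ℝ) 1, (α t ∈ C ↔ t ≤ c) := by
    intro C hC hxC hyC c hc hfr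
    have hcfr : α c ∈ frontier C := by
      have : α c ∈ frontier C ∩ α '' Set.Icc (0:ℝ) 1 := by rw [hfr]; rfl
      exact this.1
    have hcC : α c ∈ C := hC.closure_eq ▸ frontier_subset_closure hcfr
    have cross : ∀ a b : ℝ, a ∈ Set.Icc (0:ℝ) 1 → b ∈ Set.Icc (0:ℝ) 1 → a ≤ b →
        α a ∈ C → α b ∉ C → c ∈ Set.Icc a b := by
      intro a b ha hb hab haC hbC
      set S : Set ℝ := Set.Icc a b ∩ α ⁻¹' C with hS
      have hScl : IsClosed S := isClosed_Icc.inter (hC.preimage hcont)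
      have haS : a ∈ S := ⟨⟨le_refl a, hab⟩, haC⟩
      have hSne : S.Nonempty := ⟨a, haS⟩
      have hSbdd : BddAbove S := ⟨b, fun u hu => hu.1.2⟩
      set c₀ := sSup S with hc₀
      have hc₀S : c₀ ∈ S := hScl.csSup_mem hSne hSbdd
      have hc₀b : c₀ ≤ b := hc₀S.1.2
      have hc₀a : a ≤ c₀ := hc₀S.1.1
      have hc₀C : α c₀ ∈ C := hc₀S.2
      -- α c₀ ∈ closure Cᶜ
      have hmem : α c₀ ∈ closure Cᶜ := by
        have hc₀lt : c₀ < b := lt_of_le_of_ne hc₀b (fun h => hbC (h ▸ hc₀C))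
        have : ∀ u ∈ Set.Ioc c₀ b, α u ∈ Cᶜ := by
          intro u hu huC
          exact absurd (le_csSup hSbdd ⟨⟨hc₀a.trans hu.1.le, hu.2⟩, huC⟩) (not_le.mpr hu.1)
        have htend : Filter.Tendsto α (nhdsWithin c₀ (Set.Ioc c₀ b)) (nhds (α c₀)) :=
          (hcont.tendsto c₀).mono_left nhdsWithin_le_nhds
        have hne : (nhdsWithin c₀ (Set.Ioc c₀ b)).NeBot := by
          exact left_nhdsWithin_Ioc_neBot hc₀lt
        exact mem_closure_of_tendsto htend
          (Filter.eventually_iff_exists_mem.mpr ⟨Set.Ioc c₀ b, self_mem_nhdsWithin, this⟩)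
      have hfront : α c₀ ∈ frontier C := by
        rw [frontier_eq_closure_inter_closure]
        exact ⟨subset_closure hc₀C, hmem⟩
      have : α c₀ ∈ frontier C ∩ α '' Set.Icc (0:ℝ) 1 :=
        ⟨hfront, ⟨c₀, ⟨ha.1.trans hc₀a, hc₀b.trans hb.2⟩, rfl⟩⟩
      rw [hfr] at this
      have hce : c₀ = c := hinj this
      exact hce ▸ ⟨hc₀a, hc₀b⟩
    intro t ht
    constructor
    · intro htC
      by_contra hlt
      push_neg at hlt
      have := cross t 1 ht (by norm_num) ht.2 htC (by simpa [α] using hyC)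
      linarith [this.1]
    · intro hle
      by_contra htC
      have h2 := cross 0 t (by norm_num) ht ht.1 (by simpa [α] using hxC) htC
      have : t = c := le_antisymm hle h2.2
      exact htC (this ▸ hcC)
  have hAiff := key A hA hxA hyA s hs hfrA
  have hBiff := key B hB hxB hyB s' hs' hfrB
  have hss : s' < s := by
    by_contra h
    push_neg at h
    exact hsB ((hBiff s hs).mpr h)
  refine ⟨hss, fun t ht => ⟨?_, ?_, ?_⟩⟩
  · intro h
    exact ⟨(hAiff t ht).mpr (h.trans hss.le), (hBiff t ht).mpr h⟩
  · intro h1 h2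
    exact ⟨(hAiff t ht).mpr h2, fun hb => absurd ((hBiff t ht).mp hb) (not_le.mpr h1)⟩
  · intro h
    exact ⟨fun ha => absurd ((hAiff t ht).mp ha) (not_le.mpr h),
      fun hb => absurd ((hBiff t ht).mp hb) (not_le.mpr (hss.trans h))⟩
end

section
/- Let E be a real normed vector space, A and B closed subsets of E, and α(t) = x + t•(y − x). Assume x ∈ A, x ∉ B, y ∉ A, y ∈ B, and that there are s, s' ∈ [0,1] such that frontier A intersected with the segment [x,y] equals {α(s)}, frontier B intersected with the segment [x,y] equals {α(s')}, and α(s) ∈ interior B. Then s' < s, and for every t ∈ [0,1]: if t < s' then α(t) ∈ A \ B; if s' ≤ t ≤ s then α(t) ∈ A ∩ B; and if t > s then α(t) ∈ B \ A. -/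
private lemma preconn_frontier {X : Type*} [TopologicalSpace X] {s t : Set X}
    (hs : IsPreconnected s) (h1 : (s ∩ t).Nonempty) (h2 : (s \ t).Nonempty) :
    (s ∩ frontier t).Nonempty := by
  by_contra hemp
  rw [Set.not_nonempty_iff_eq_empty] at hemp
  have hsub : s ⊆ interior t ∪ interior tᶜ := by
    intro z hz
    by_contra hz'
    rw [Set.mem_union] at hz'
    push_neg at hz'
    have hzfr : z ∈ frontier t := by
      constructor
      · rw [← compl_compl (closure t), ← interior_compl]
        simpa using hz'.2
      · exact hz'.1
    exact Set.eq_empty_iff_forall_notMem.mp hemp z ⟨hz, hzfr⟩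
  obtain ⟨w, hw⟩ := hs (interior t) (interior tᶜ) isOpen_interior isOpen_interior hsub
    (by
      obtain ⟨a, ha, hat⟩ := h1
      refine ⟨a, ha, ?_⟩
      rcases hsub ha with h | h
      · exact h
      · exact absurd hat (interior_subset h))
    (by
      obtain ⟨a, ha, hat⟩ := h2
      refine ⟨a, ha, ?_⟩
      rcases hsub ha with h | h
      · exact absurd (interior_subset h) hat
      · exact h)
  exact (interior_subset hw.2.2 : w ∈ tᶜ) (interior_subset hw.2.1)

private lemma crossing_aux {E : Type*} [NormedAddCommGroup E] [NormedSpace ℝ E]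
    (A : Set E) (x y : E) (t₀ t₁ : ℝ) (h : t₀ ≤ t₁)
    (h0 : x + t₀ • (y - x) ∈ A) (h1 : x + t₁ • (y - x) ∉ A) :
    ∃ u ∈ Set.Icc t₀ t₁, x + u • (y - x) ∈ frontier A := by
  have hc : Continuous fun t : ℝ => x + t • (y - x) := by continuity
  have hpc : IsPreconnected ((fun t : ℝ => x + t • (y - x)) '' Set.Icc t₀ t₁) :=
    (isPreconnected_Icc).image _ hc.continuousOn
  have h2 := preconn_frontier hpc
    ⟨_, ⟨t₀, ⟨le_refl _, h⟩, rfl⟩, h0⟩ ⟨_, ⟨t₁, ⟨h, le_refl _⟩, rfl⟩, h1⟩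
  obtain ⟨z, ⟨u, hu, rfl⟩, hz⟩ := h2
  exact ⟨u, hu, hz⟩

private lemma crossing_aux' {E : Type*} [NormedAddCommGroup E] [NormedSpace ℝ E]
    (A : Set E) (x y : E) (t₀ t₁ : ℝ) (h : t₀ ≤ t₁)
    (h0 : x + t₀ • (y - x) ∉ A) (h1 : x + t₁ • (y - x) ∈ A) :
    ∃ u ∈ Set.Icc t₀ t₁, x + u • (y - x) ∈ frontier A := by
  have hc : Continuous fun t : ℝ => x + t • (y - x) := by continuity
  have hpc : IsPreconnected ((fun t : ℝ => x + t • (y - x)) '' Set.Icc t₀ t₁) :=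
    (isPreconnected_Icc).image _ hc.continuousOn
  have h2 := preconn_frontier hpc
    ⟨_, ⟨t₁, ⟨h, le_refl _⟩, rfl⟩, h1⟩ ⟨_, ⟨t₀, ⟨le_refl _, h⟩, rfl⟩, h0⟩
  obtain ⟨z, ⟨u, hu, rfl⟩, hz⟩ := h2
  exact ⟨u, hu, hz⟩

theorem case_II1a {E : Type*} [NormedAddCommGroup E] [NormedSpace ℝ E]
    (A B : Set E) (hA : IsClosed A) (hB : IsClosed B) (x y : E)
    (hxA : x ∈ A) (hxB : x ∉ B) (hyA : y ∉ A) (hyB : y ∈ B)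
    (s s' : ℝ) (hs : s ∈ Set.Icc (0:ℝ) 1) (hs' : s' ∈ Set.Icc (0:ℝ) 1)
    (hfrA : frontier A ∩ (fun t : ℝ => x + t • (y - x)) '' Set.Icc (0:ℝ) 1
      = {x + s • (y - x)})
    (hfrB : frontier B ∩ (fun t : ℝ => x + t • (y - x)) '' Set.Icc (0:ℝ) 1
      = {x + s' • (y - x)})
    (hsB : x + s • (y - x) ∈ interior B) :
    s' < s ∧ ∀ t ∈ Set.Icc (0:ℝ) 1,
      (t < s' → x + t • (y - x) ∈ A \ B) ∧
      (s' ≤ t → t ≤ s → x + t • (y - x) ∈ A ∩ B) ∧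
      (s < t → x + t • (y - x) ∈ B \ A) := by
  have hxy : x ≠ y := fun h => hyA (h ▸ hxA)
  have hv : y - x ≠ 0 := sub_ne_zero.mpr hxy.symm
  have inj : ∀ a b : ℝ, x + a • (y - x) = x + b • (y - x) → a = b := by
    intro a b h
    exact smul_left_injective ℝ hv (add_left_cancel h)
  have h0 : x + (0:ℝ) • (y - x) = x := by simp
  have h1 : x + (1:ℝ) • (y - x) = y := by simp
  have hy1A : x + (1:ℝ) • (y - x) ∉ A := by rw [h1]; exact hyA
  have hy1B : x + (1:ℝ) • (y - x) ∈ B := by rw [h1]; exact hyB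
  have hx0A : x + (0:ℝ) • (y - x) ∈ A := by rw [h0]; exact hxA
  have hx0B : x + (0:ℝ) • (y - x) ∉ B := by rw [h0]; exact hxB
  have hsA : x + s • (y - x) ∈ frontier A := by
    have : x + s • (y - x) ∈ ({x + s • (y - x)} : Set E) := rfl
    rw [← hfrA] at this; exact this.1
  have hs'B : x + s' • (y - x) ∈ frontier B := by
    have : x + s' • (y - x) ∈ ({x + s' • (y - x)} : Set E) := rfl
    rw [← hfrB] at this; exact this.1
  have memA : ∀ t ∈ Set.Icc (0:ℝ) 1, (x + t • (y - x) ∈ A ↔ t ≤ s) := by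
    intro t ht
    constructor
    · intro htA
      by_contra hts
      push_neg at hts
      obtain ⟨u, hu, hufr⟩ := crossing_aux A x y t 1 ht.2 htA hy1A
      have huIcc : u ∈ Set.Icc (0:ℝ) 1 := ⟨le_trans ht.1 hu.1, hu.2⟩
      have hmem : x + u • (y - x) ∈ ({x + s • (y - x)} : Set E) := by
        rw [← hfrA]; exact ⟨hufr, ⟨u, huIcc, rfl⟩⟩
      have := inj u s hmem
      linarith [hu.1]
    · intro hts
      rcases eq_or_lt_of_le hts with heq | hlt
      · subst heq
        exact hA.closure_eq ▸ hsA.1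
      · by_contra htA
        obtain ⟨u, hu, hufr⟩ := crossing_aux A x y 0 t ht.1 hx0A htA
        have huIcc : u ∈ Set.Icc (0:ℝ) 1 := ⟨hu.1, le_trans hu.2 ht.2⟩
        have hmem : x + u • (y - x) ∈ ({x + s • (y - x)} : Set E) := by
          rw [← hfrA]; exact ⟨hufr, ⟨u, huIcc, rfl⟩⟩
        have := inj u s hmem
        linarith [hu.2]
  have memB : ∀ t ∈ Set.Icc (0:ℝ) 1, (x + t • (y - x) ∈ B ↔ s' ≤ t) := by
    intro t ht
    constructor
    · intro htB
      by_contra hts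
      push_neg at hts
      obtain ⟨u, hu, hufr⟩ := crossing_aux' B x y 0 t ht.1 hx0B htB
      have huIcc : u ∈ Set.Icc (0:ℝ) 1 := ⟨hu.1, le_trans hu.2 ht.2⟩
      have hmem : x + u • (y - x) ∈ ({x + s' • (y - x)} : Set E) := by
        rw [← hfrB]; exact ⟨hufr, ⟨u, huIcc, rfl⟩⟩
      have := inj u s' hmem
      linarith [hu.2]
    · intro hts
      rcases eq_or_lt_of_le hts with heq | hlt
      · subst heq
        exact hB.closure_eq ▸ hs'B.1
      · by_contra htB
        obtain ⟨u, hu, hufr⟩ := crossing_aux' B x y t 1 ht.2 htB hy1B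
        have huIcc : u ∈ Set.Icc (0:ℝ) 1 := ⟨le_trans ht.1 hu.1, hu.2⟩
        have hmem : x + u • (y - x) ∈ ({x + s' • (y - x)} : Set E) := by
          rw [← hfrB]; exact ⟨hufr, ⟨u, huIcc, rfl⟩⟩
        have := inj u s' hmem
        linarith [hu.1]
  have hss' : s' < s := by
    have hne : s ≠ s' := by
      intro h
      have hfr : x + s • (y - x) ∈ frontier B := h ▸ hs'B
      exact hfr.2 hsB
    by_contra hle
    push_neg at hle
    have hlt : s < s' := lt_of_le_of_ne hle hne
    have : s' ≤ s := (memB s hs).mp (interior_subset hsB)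
    linarith
  refine ⟨hss', fun t ht => ⟨?_, ?_, ?_⟩⟩
  · intro hts'
    exact ⟨(memA t ht).mpr (le_of_lt (lt_trans hts' hss')),
      fun hb => absurd ((memB t ht).mp hb) (not_le.mpr hts')⟩
  · intro ha hb
    exact ⟨(memA t ht).mpr hb, (memB t ht).mpr ha⟩
  · intro hst
    exact ⟨(memB t ht).mpr (le_of_lt (lt_trans hss' hst)),
      fun ha => absurd ((memA t ht).mp ha) (not_le.mpr hst)⟩
end

section
/- Let E be a real normed vector space, A and B closed subsets of E, and α(t) = x + t•(y − x). Assume x ∈ A, x ∉ B, y ∉ A, y ∈ B, and that there are s, s' ∈ [0,1] such that frontier A intersected with the segment [x,y] equals {α(s)}, frontier B intersected with the segment [x,y] equals {α(s')}, and α(s) ∉ B. Then s < s', and for every t ∈ [0,1]: if t ≤ s then α(t) ∈ A \ B; if s < t < s' then α(t) ∉ A and α(t) ∉ B; and if t ≥ s' then α(t) ∈ B \ A. -/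
open Set

/-- If a continuous path enters and leaves a set, it meets the frontier. -/
lemma crossing_lemma {E : Type*} [TopologicalSpace E] {f : ℝ → E} (hf : Continuous f)
    {A : Set E} {a b : ℝ} (hab : a ≤ b) (ha : f a ∈ A) (hb : f b ∉ A) :
    ∃ u ∈ Set.Icc a b, f u ∈ frontier A := by
  by_contra h
  push_neg at h
  have hpre : IsPreconnected (f '' Set.Icc a b) :=
    (isPreconnected_Icc).image f hf.continuousOn
  have hsub : f '' Set.Icc a b ⊆ interior A ∪ (closure A)ᶜ := by
    rintro _ ⟨u, hu, rfl⟩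
    have hfr := h u hu
    rcases em (f u ∈ closure A) with hc | hc
    · left; rw [frontier, Set.mem_diff] at hfr; push_neg at hfr; exact hfr hc
    · right; exact hc
  have h1 : (f '' Set.Icc a b ∩ interior A).Nonempty := by
    refine ⟨f a, ⟨a, ⟨le_refl a, hab⟩, rfl⟩, ?_⟩
    have hfr := h a ⟨le_refl a, hab⟩
    rw [frontier, Set.mem_diff] at hfr; push_neg at hfr
    exact hfr (subset_closure ha)
  have h2 : (f '' Set.Icc a b ∩ (closure A)ᶜ).Nonempty := by
    refine ⟨f b, ⟨b, ⟨hab, le_refl b⟩, rfl⟩, fun hc => ?_⟩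
    have hfr := h b ⟨hab, le_refl b⟩
    rw [frontier, Set.mem_diff] at hfr; push_neg at hfr
    exact hb (interior_subset (hfr hc))
  obtain ⟨z, hz⟩ := hpre (interior A) (closure A)ᶜ isOpen_interior
    isClosed_closure.isOpen_compl hsub h1 h2
  exact hz.2.2 (subset_closure (interior_subset hz.2.1))

/-- Characterization: with unique frontier crossing at `s`, membership in the closed set
`A` on the segment is exactly `t ≤ s`. -/
lemma mem_iff_le {E : Type*} [NormedAddCommGroup E] [NormedSpace ℝ E]
    {A : Set E} (hA : IsClosed A) {x y : E} (hxA : x ∈ A) (hyA : y ∉ A)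
    {s : ℝ} (hs : s ∈ Set.Icc (0:ℝ) 1)
    (hfrA : frontier A ∩ (fun t : ℝ => x + t • (y - x)) '' Set.Icc (0:ℝ) 1
      = {x + s • (y - x)}) :
    ∀ t ∈ Set.Icc (0:ℝ) 1, (x + t • (y - x) ∈ A ↔ t ≤ s) := by
  have hxy : y - x ≠ 0 := fun h => hyA (by rw [sub_eq_zero] at h; rw [h]; exact hxA)
  have hcont : Continuous (fun t : ℝ => x + t • (y - x)) := by continuity
  have hinj : ∀ u v : ℝ, x + u • (y - x) = x + v • (y - x) → u = v := by
    intro u v h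
    have : (u - v) • (y - x) = 0 := by
      rw [sub_smul]; rw [add_right_inj] at h; rw [h, sub_self]
    rcases smul_eq_zero.mp this with h' | h'
    · linarith [sub_eq_zero.mp (by linarith [h'] : u - v = 0)]
    · exact absurd h' hxy
  have huniq : ∀ u ∈ Set.Icc (0:ℝ) 1, x + u • (y - x) ∈ frontier A → u = s := by
    intro u hu hfu
    have : x + u • (y - x) ∈ frontier A ∩ (fun t : ℝ => x + t • (y - x)) '' Set.Icc (0:ℝ) 1 :=
      ⟨hfu, ⟨u, hu, rfl⟩⟩
    rw [hfrA, Set.mem_singleton_iff] at this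
    exact hinj u s this
  have hsA : x + s • (y - x) ∈ A := by
    have : x + s • (y - x) ∈ frontier A := by
      have := hfrA.symm ▸ Set.mem_singleton (x + s • (y - x))
      exact this.1
    exact hA.frontier_subset this
  intro t ht
  constructor
  · intro htA
    by_contra hlt
    push_neg at hlt
    obtain ⟨u, hu, hfu⟩ := crossing_lemma hcont ht.2 htA
      (by simpa using hyA)
    have hu01 : u ∈ Set.Icc (0:ℝ) 1 := ⟨le_trans ht.1 hu.1, hu.2⟩
    have := huniq u hu01 hfu
    linarith [hu.1]
  · intro hts
    rcases eq_or_lt_of_le hts with rfl | hlt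
    · exact hsA
    by_contra htA
    obtain ⟨u, hu, hfu⟩ := crossing_lemma hcont ht.1 (by simpa using hxA) htA
    have hu01 : u ∈ Set.Icc (0:ℝ) 1 := ⟨hu.1, le_trans hu.2 ht.2⟩
    have := huniq u hu01 hfu
    linarith [hu.2]


/-- Symmetric version: with unique frontier crossing at `s'`, membership in closed `B`
(entered at `y`) on the segment is exactly `s' ≤ t`. -/
lemma mem_iff_ge {E : Type*} [NormedAddCommGroup E] [NormedSpace ℝ E]
    {B : Set E} (hB : IsClosed B) {x y : E} (hxB : x ∉ B) (hyB : y ∈ B)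
    {s' : ℝ} (hs' : s' ∈ Set.Icc (0:ℝ) 1)
    (hfrB : frontier B ∩ (fun t : ℝ => x + t • (y - x)) '' Set.Icc (0:ℝ) 1
      = {x + s' • (y - x)}) :
    ∀ t ∈ Set.Icc (0:ℝ) 1, (x + t • (y - x) ∈ B ↔ s' ≤ t) := by
  have hxy : y - x ≠ 0 := fun h => hxB (by rw [sub_eq_zero] at h; rw [← h]; exact hyB)
  have hcont : Continuous (fun t : ℝ => x + t • (y - x)) := by continuity
  have hinj : ∀ u v : ℝ, x + u • (y - x) = x + v • (y - x) → u = v := by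
    intro u v h
    have : (u - v) • (y - x) = 0 := by
      rw [sub_smul]; rw [add_right_inj] at h; rw [h, sub_self]
    rcases smul_eq_zero.mp this with h' | h'
    · linarith [sub_eq_zero.mp (by linarith [h'] : u - v = 0)]
    · exact absurd h' hxy
  have huniq : ∀ u ∈ Set.Icc (0:ℝ) 1, x + u • (y - x) ∈ frontier B → u = s' := by
    intro u hu hfu
    have : x + u • (y - x) ∈ frontier B ∩ (fun t : ℝ => x + t • (y - x)) '' Set.Icc (0:ℝ) 1 :=
      ⟨hfu, ⟨u, hu, rfl⟩⟩
    rw [hfrB, Set.mem_singleton_iff] at this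
    exact hinj u s' this
  have hsB' : x + s' • (y - x) ∈ B := by
    have : x + s' • (y - x) ∈ frontier B := (hfrB.symm ▸ Set.mem_singleton _).1
    exact hB.frontier_subset this
  intro t ht
  constructor
  · intro htB
    by_contra hlt
    push_neg at hlt
    obtain ⟨u, hu, hfu⟩ := crossing_lemma (A := Bᶜ) hcont ht.1 (by simpa using hxB)
      (by simpa using htB)
    have hu01 : u ∈ Set.Icc (0:ℝ) 1 := ⟨hu.1, le_trans hu.2 ht.2⟩
    have := huniq u hu01 (by simpa [frontier_compl] using hfu)
    linarith [hu.2]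
  · intro hts
    rcases eq_or_lt_of_le hts with rfl | hlt
    · exact hsB'
    by_contra htB
    obtain ⟨u, hu, hfu⟩ := crossing_lemma (A := Bᶜ) hcont ht.2 (by simpa using htB)
      (by simpa using hyB)
    have hu01 : u ∈ Set.Icc (0:ℝ) 1 := ⟨le_trans ht.1 hu.1, hu.2⟩
    have := huniq u hu01 (by simpa [frontier_compl] using hfu)
    linarith [hu.1]

theorem case_II2a {E : Type*} [NormedAddCommGroup E] [NormedSpace ℝ E]
    (A B : Set E) (hA : IsClosed A) (hB : IsClosed B) (x y : E)
    (hxA : x ∈ A) (hxB : x ∉ B) (hyA : y ∉ A) (hyB : y ∈ B)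
    (s s' : ℝ) (hs : s ∈ Set.Icc (0:ℝ) 1) (hs' : s' ∈ Set.Icc (0:ℝ) 1)
    (hfrA : frontier A ∩ (fun t : ℝ => x + t • (y - x)) '' Set.Icc (0:ℝ) 1
      = {x + s • (y - x)})
    (hfrB : frontier B ∩ (fun t : ℝ => x + t • (y - x)) '' Set.Icc (0:ℝ) 1
      = {x + s' • (y - x)})
    (hsB : x + s • (y - x) ∉ B) :
    s < s' ∧ ∀ t ∈ Set.Icc (0:ℝ) 1,
      (t ≤ s → x + t • (y - x) ∈ A \ B) ∧
      (s < t → t < s' → x + t • (y - x) ∉ A ∧ x + t • (y - x) ∉ B) ∧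
      (s' ≤ t → x + t • (y - x) ∈ B \ A) := by
  have hAiff := mem_iff_le hA hxA hyA hs hfrA
  have hBiff := mem_iff_ge hB hxB hyB hs' hfrB
  have hss' : s < s' := by
    by_contra h
    push_neg at h
    exact hsB ((hBiff s hs).mpr h)
  refine ⟨hss', fun t ht => ⟨?_, ?_, ?_⟩⟩
  · intro hts
    exact ⟨(hAiff t ht).mpr hts, fun hb => absurd ((hBiff t ht).mp hb) (by linarith)⟩
  · intro h1 h2
    exact ⟨fun ha => absurd ((hAiff t ht).mp ha) (by linarith),
           fun hb => absurd ((hBiff t ht).mp hb) (by linarith)⟩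
  · intro hts
    exact ⟨(hBiff t ht).mpr hts, fun ha => absurd ((hAiff t ht).mp ha) (by linarith)⟩
end

section
/- Let E be a real normed vector space, A and B closed subsets of E, and α(t) = x + t•(y − x). Assume x ∈ A, x ∉ B, y ∉ A, y ∉ B, and that there is s ∈ [0,1] such that frontier A intersected with the segment [x,y] equals {α(s)}, while frontier B is disjoint from the segment [x,y]. Then for every t ∈ [0,1]: if t ≤ s then α(t) ∈ A \ B, and if t > s then α(t) ∉ A and α(t) ∉ B. -/
lemma conn_side {E : Type*} [TopologicalSpace E] (A S : Set E)
    (hS : IsPreconnected S) (hd : ∀ z ∈ S, z ∉ frontier A) :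
    S ⊆ interior A ∨ S ⊆ (closure A)ᶜ := by
  apply hS.subset_or_subset isOpen_interior (isClosed_closure.isOpen_compl)
  · exact Set.disjoint_left.2 fun z hz hz' => hz' (interior_subset_closure hz)
  · intro z hz
    by_cases h : z ∈ closure A
    · left
      by_contra h'
      exact hd z hz ⟨h, h'⟩
    · right; exact h

theorem case_II2b {E : Type*} [NormedAddCommGroup E] [NormedSpace ℝ E]
    (A B : Set E) (hA : IsClosed A) (hB : IsClosed B) (x y : E)
    (hxA : x ∈ A) (hxB : x ∉ B) (hyA : y ∉ A) (hyB : y ∉ B)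
    (s : ℝ) (hs : s ∈ Set.Icc (0:ℝ) 1)
    (hfrA : frontier A ∩ (fun t : ℝ => x + t • (y - x)) '' Set.Icc (0:ℝ) 1
      = {x + s • (y - x)})
    (hfrB : frontier B ∩ (fun t : ℝ => x + t • (y - x)) '' Set.Icc (0:ℝ) 1 = ∅) :
    ∀ t ∈ Set.Icc (0:ℝ) 1,
      (t ≤ s → x + t • (y - x) ∈ A \ B) ∧
      (s < t → x + t • (y - x) ∉ A ∧ x + t • (y - x) ∉ B) := by
  set f : ℝ → E := fun t => x + t • (y - x) with hf_def
  have hf : Continuous f := by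
    apply continuous_const.add
    exact continuous_id.smul continuous_const
  have hxy : y - x ≠ 0 := by
    intro h
    exact hyA (by rw [sub_eq_zero.1 h]; exact hxA)
  have hinj : ∀ u v : ℝ, f u = f v → u = v := by
    intro u v h
    have : (u - v) • (y - x) = 0 := by
      simp only [hf_def] at h
      have := add_left_cancel h
      rw [sub_smul, this, sub_self]
    rcases smul_eq_zero.1 this with h1 | h1
    · linarith [sub_eq_zero.1 h1]
    · exact absurd h1 hxy
  have hf0 : f 0 = x := by simp [hf_def]
  have hf1 : f 1 = y := by simp [hf_def]
  -- B part: the whole segment avoids B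
  have hBseg : ∀ t ∈ Set.Icc (0:ℝ) 1, f t ∉ B := by
    have hconn : IsPreconnected (f '' Set.Icc (0:ℝ) 1) :=
      (isPreconnected_Icc).image f hf.continuousOn
    have hd : ∀ z ∈ f '' Set.Icc (0:ℝ) 1, z ∉ frontier B := by
      intro z hz hzf
      have : z ∈ frontier B ∩ f '' Set.Icc (0:ℝ) 1 := ⟨hzf, hz⟩
      rw [hfrB] at this
      exact this
    rcases conn_side B _ hconn hd with h | h
    · exfalso
      have : x ∈ interior B := h ⟨0, ⟨le_refl 0, zero_le_one⟩, hf0⟩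
      exact hxB (interior_subset this)
    · intro t ht htB
      exact h ⟨t, ht, rfl⟩ (subset_closure htB)
  -- frontier A on segment is exactly f s
  have hfrA' : ∀ u ∈ Set.Icc (0:ℝ) 1, f u ∈ frontier A → u = s := by
    intro u hu hfu
    have : f u ∈ frontier A ∩ f '' Set.Icc (0:ℝ) 1 := ⟨hfu, ⟨u, hu, rfl⟩⟩
    rw [hfrA] at this
    exact hinj u s this
  intro t ht
  constructor
  · intro hts
    refine ⟨?_, hBseg t ht⟩
    rcases eq_or_lt_of_le hts with h | h
    · -- t = s : f s ∈ frontier A ⊆ A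
      have : f s ∈ frontier A := by
        have : f s ∈ ({f s} : Set E) := rfl
        rw [← hfrA] at this
        exact this.1
      rw [h]
      exact hA.closure_subset (frontier_subset_closure this)
    · -- t < s : segment [0,t] avoids frontier A, contains x ∈ A
      have hsub : Set.Icc (0:ℝ) t ⊆ Set.Icc 0 1 := Set.Icc_subset_Icc le_rfl ht.2
      have hconn : IsPreconnected (f '' Set.Icc (0:ℝ) t) :=
        (isPreconnected_Icc).image f hf.continuousOn
      have hd : ∀ z ∈ f '' Set.Icc (0:ℝ) t, z ∉ frontier A := by
        rintro z ⟨u, hu, rfl⟩ hz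
        have := hfrA' u (hsub hu) hz
        linarith [hu.2]
      rcases conn_side A _ hconn hd with h' | h'
      · exact interior_subset (h' ⟨t, ⟨ht.1, le_rfl⟩, rfl⟩)
      · exfalso
        exact h' ⟨0, ⟨le_rfl, ht.1⟩, hf0⟩
          (subset_closure (hf0 ▸ hxA))
  · intro hst
    have hsub : Set.Icc t 1 ⊆ Set.Icc (0:ℝ) 1 := Set.Icc_subset_Icc ht.1 le_rfl
    have hconn : IsPreconnected (f '' Set.Icc t 1) :=
      (isPreconnected_Icc).image f hf.continuousOn
    have hd : ∀ z ∈ f '' Set.Icc t 1, z ∉ frontier A := by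
      rintro z ⟨u, hu, rfl⟩ hz
      have := hfrA' u (hsub hu) hz
      linarith [hu.1]
    have hnotA : f t ∉ A := by
      rcases conn_side A _ hconn hd with h' | h'
      · exfalso
        have : y ∈ interior A := hf1 ▸ h' ⟨1, ⟨ht.2, le_rfl⟩, rfl⟩
        exact hyA (interior_subset this)
      · intro hfA
        exact h' ⟨t, ⟨le_rfl, ht.2⟩, rfl⟩ (subset_closure hfA)
    exact ⟨hnotA, hBseg t ht⟩
end

section
/- (Convergence into a hidden outlier, monotone case I.1.b.) Let E be a real normed vector space, A and B closed subsets of E, and α(t) = x + t•(y − x). Define F : E → ℤ by F(w) = −1 if w ∈ A ∩ B, F(w) = 0 if w belongs to exactly one of A and B, and F(w) = 1 if w ∉ A ∪ B. Assume x ∈ A ∩ B, y ∉ A, y ∉ B, and that there are s, s' ∈ [0,1] such that frontier A intersected with the segment [x,y] equals {α(s)}, frontier B intersected with the segment [x,y] equals {α(s')}, and α(s) ∈ interior B. Then the function t ↦ F(α(t)) is monotone nondecreasing on [0,1]. -/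
lemma segment_mem_iff_le {E : Type*} [NormedAddCommGroup E] [NormedSpace ℝ E]
    (A : Set E) (hA : IsClosed A) (x y : E) (hxA : x ∈ A) (hyA : y ∉ A)
    (s : ℝ) (hs : s ∈ Set.Icc (0:ℝ) 1)
    (hfrA : frontier A ∩ (fun t : ℝ => x + t • (y - x)) '' Set.Icc (0:ℝ) 1
      = {x + s • (y - x)}) :
    ∀ t ∈ Set.Icc (0:ℝ) 1, (x + t • (y - x) ∈ A ↔ t ≤ s) := by
  set α : ℝ → E := fun t => x + t • (y - x) with hα
  have hne : y - x ≠ 0 := sub_ne_zero.2 (fun h => hyA (h ▸ hxA))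
  have hinj : ∀ u v : ℝ, α u = α v → u = v := by
    intro u v h
    have : (u - v) • (y - x) = 0 := by
      simp only [α, hα] at h
      rw [sub_smul]
      have := add_left_cancel h
      rw [this]; abel
    rcases smul_eq_zero.1 this with h' | h'
    · linarith [sub_eq_zero.1 (by exact_mod_cast h')]
    · exact absurd h' hne
  have hcont : Continuous α := by
    exact continuous_const.add (continuous_id.smul continuous_const)
  have hα0 : α 0 = x := by simp [α]
  have hα1 : α 1 = y := by simp [α]
  have key : ∀ a b : ℝ, a ≤ b → α a ∈ A → α b ∉ A →
      ∃ u ∈ Set.Icc a b, α u ∈ frontier A := by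
    intro a b hab haA hbA
    set S : Set ℝ := Set.Icc a b ∩ α ⁻¹' A with hS
    have hSne : S.Nonempty := ⟨a, Set.left_mem_Icc.2 hab, haA⟩
    have hSbdd : BddAbove S := ⟨b, fun u hu => hu.1.2⟩
    have hSclosed : IsClosed S := isClosed_Icc.inter (hA.preimage hcont)
    have hcS : sSup S ∈ S := hSclosed.csSup_mem hSne hSbdd
    set c := sSup S with hc
    have hcb : c < b := lt_of_le_of_ne hcS.1.2 (fun h => hbA (h ▸ hcS.2))
    have hnotint : α c ∉ interior A := by
      intro hint
      have hopen : IsOpen (α ⁻¹' interior A) := isOpen_interior.preimage hcont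
      obtain ⟨ε, hε, hball⟩ := Metric.isOpen_iff.1 hopen c hint
      set c' := min (c + ε / 2) b with hc'
      have hcc' : c < c' := lt_min (by linarith) hcb
      have hc'b : c' ≤ b := min_le_right _ _
      have hc'ball : c' ∈ Metric.ball c ε := by
        rw [Real.ball_eq_Ioo]
        exact ⟨by linarith, lt_of_le_of_lt (min_le_left _ _) (by linarith)⟩
      have hc'S : c' ∈ S :=
        ⟨⟨le_trans hcS.1.1 hcc'.le, hc'b⟩, Set.preimage_mono interior_subset (hball hc'ball)⟩
      exact absurd (le_csSup hSbdd hc'S) (not_le.2 hcc')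
    refine ⟨c, hcS.1, ?_⟩
    rw [hA.frontier_eq]
    exact ⟨hcS.2, hnotint⟩
  have hsfr : α s ∈ frontier A := by
    have : α s ∈ frontier A ∩ α '' Set.Icc (0:ℝ) 1 := by
      rw [hfrA]; rfl
    exact this.1
  intro t ht
  constructor
  · intro htA
    by_contra hts
    push_neg at hts
    obtain ⟨u, hu, hufr⟩ := key t 1 ht.2 htA (hα1 ▸ hyA)
    have humem : α u ∈ frontier A ∩ α '' Set.Icc (0:ℝ) 1 :=
      ⟨hufr, Set.mem_image_of_mem α ⟨le_trans ht.1 hu.1, hu.2⟩⟩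
    rw [hfrA] at humem
    have := hinj u s humem
    linarith [hu.1]
  · intro hts
    rcases eq_or_lt_of_le hts with rfl | hlt
    · exact hA.closure_eq ▸ (frontier_subset_closure hsfr)
    · by_contra htA
      obtain ⟨u, hu, hufr⟩ := key 0 t ht.1 (hα0 ▸ hxA) htA
      have humem : α u ∈ frontier A ∩ α '' Set.Icc (0:ℝ) 1 :=
        ⟨hufr, Set.mem_image_of_mem α ⟨hu.1, le_trans hu.2 ht.2⟩⟩
      rw [hfrA] at humem
      have := hinj u s humem
      linarith [hu.2]


open Classical in
/-- The indicator function used by the bisection method: `-1` on `A ∩ B`,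
`0` on points belonging to exactly one of `A` and `B` (hidden outliers),
and `1` outside `A ∪ B`. -/
noncomputable def bisectIndicator {E : Type*} (A B : Set E) (w : E) : ℤ :=
  if w ∈ A ∩ B then -1 else if w ∈ A ∪ B then 0 else 1

theorem monotone_case_I1b {E : Type*} [NormedAddCommGroup E] [NormedSpace ℝ E]
    (A B : Set E) (hA : IsClosed A) (hB : IsClosed B) (x y : E)
    (hxA : x ∈ A) (hxB : x ∈ B) (hyA : y ∉ A) (hyB : y ∉ B)
    (s s' : ℝ) (hs : s ∈ Set.Icc (0:ℝ) 1) (hs' : s' ∈ Set.Icc (0:ℝ) 1)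
    (hfrA : frontier A ∩ (fun t : ℝ => x + t • (y - x)) '' Set.Icc (0:ℝ) 1
      = {x + s • (y - x)})
    (hfrB : frontier B ∩ (fun t : ℝ => x + t • (y - x)) '' Set.Icc (0:ℝ) 1
      = {x + s' • (y - x)})
    (hsB : x + s • (y - x) ∈ interior B) :
    MonotoneOn (fun t : ℝ => bisectIndicator A B (x + t • (y - x)))
      (Set.Icc (0:ℝ) 1) := by
  have hAiff := segment_mem_iff_le A hA x y hxA hyA s hs hfrA
  have hBiff := segment_mem_iff_le B hB x y hxB hyB s' hs' hfrB
  have hss' : s ≤ s' := (hBiff s hs).1 (interior_subset hsB)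
  intro a ha b hb hab
  have hand : ∀ t : ℝ, (t ≤ s ∧ t ≤ s') ↔ t ≤ s :=
    fun t => ⟨And.left, fun h => ⟨h, h.trans hss'⟩⟩
  have hor : ∀ t : ℝ, (t ≤ s ∨ t ≤ s') ↔ t ≤ s' :=
    fun t => ⟨fun h => h.elim (fun h => h.trans hss') id, Or.inr⟩
  simp only [bisectIndicator, Set.mem_inter_iff, Set.mem_union, hAiff a ha, hBiff a ha,
    hAiff b hb, hBiff b hb, hand, hor]
  split_ifs <;> (try push_neg at *) <;> try norm_num
  all_goals linarith
end

section
/- Let E be a real normed vector space, A and B closed subsets of E, and α(t) = x + t•(y − x). Assume x ∈ A ∩ B, y ∉ A, y ∉ B, and that there are s, s' ∈ [0,1] such that frontier A intersected with the segment [x,y] equals {α(s)}, frontier B intersected with the segment [x,y] equals {α(s')}, and α(s) ∈ interior B. Then s < s', and the set {t ∈ [0,1] : α(t) ∈ (A \ B) ∪ (B \ A)} contains the nonempty open interval (s, s'); in particular the segment [x,y] meets the hidden region in infinitely many points. -/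
lemma stay_in_of_no_frontier {E : Type*} [TopologicalSpace E] {f : ℝ → E}
    (hc : Continuous f) {A : Set E} (hA : IsClosed A) {K : Set ℝ}
    (hK : IsPreconnected K) (hfr : ∀ t ∈ K, f t ∉ frontier A)
    {a b : ℝ} (ha : a ∈ K) (hb : b ∈ K) (haA : f a ∈ A) : f b ∈ A := by
  by_contra hbA
  have hsub : K ⊆ f ⁻¹' (interior A) ∪ f ⁻¹' Aᶜ := by
    intro t ht
    by_cases h : f t ∈ A
    · left
      have hnf := hfr t ht
      rw [hA.frontier_eq] at hnf
      simp only [Set.mem_diff, not_and, not_not] at hnf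
      exact hnf h
    · right; exact h
  have haI : f a ∈ interior A := by
    have hnf := hfr a ha
    rw [hA.frontier_eq] at hnf
    simp only [Set.mem_diff, not_and, not_not] at hnf
    exact hnf haA
  obtain ⟨t, _, h1, h2⟩ := hK _ _ (isOpen_interior.preimage hc)
    (hA.isOpen_compl.preimage hc) hsub ⟨a, ha, haI⟩ ⟨b, hb, hbA⟩
  exact h2 (interior_subset h1)

theorem hidden_region_contains_interval {E : Type*} [NormedAddCommGroup E]
    [NormedSpace ℝ E]
    (A B : Set E) (hA : IsClosed A) (hB : IsClosed B) (x y : E)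
    (hxA : x ∈ A) (hxB : x ∈ B) (hyA : y ∉ A) (hyB : y ∉ B)
    (s s' : ℝ) (hs : s ∈ Set.Icc (0:ℝ) 1) (hs' : s' ∈ Set.Icc (0:ℝ) 1)
    (hfrA : frontier A ∩ (fun t : ℝ => x + t • (y - x)) '' Set.Icc (0:ℝ) 1
      = {x + s • (y - x)})
    (hfrB : frontier B ∩ (fun t : ℝ => x + t • (y - x)) '' Set.Icc (0:ℝ) 1
      = {x + s' • (y - x)})
    (hsB : x + s • (y - x) ∈ interior B) :
    s < s' ∧
    Set.Ioo s s' ⊆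
      {t ∈ Set.Icc (0:ℝ) 1 | x + t • (y - x) ∈ (A \ B) ∪ (B \ A)} ∧
    ((fun t : ℝ => x + t • (y - x)) '' Set.Icc (0:ℝ) 1 ∩
      ((A \ B) ∪ (B \ A))).Infinite := by
  set f : ℝ → E := fun t : ℝ => x + t • (y - x) with hf
  have hv : y - x ≠ 0 := sub_ne_zero.mpr (fun h => hyA (h ▸ hxA))
  have hinj : Function.Injective f := by
    intro a b h
    have h' : a • (y - x) = b • (y - x) := add_left_cancel h
    exact smul_left_injective ℝ hv h'
  have hc : Continuous f := continuous_const.add (continuous_id.smul continuous_const)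
  have hf1 : f 1 = y := by simp [hf]
  have hfrA' : ∀ t ∈ Set.Icc (0:ℝ) 1, f t ∈ frontier A → t = s := by
    intro t ht hfr
    have : f t ∈ frontier A ∩ f '' Set.Icc (0:ℝ) 1 := ⟨hfr, ⟨t, ht, rfl⟩⟩
    rw [hfrA] at this
    exact hinj this
  have hfrB' : ∀ t ∈ Set.Icc (0:ℝ) 1, f t ∈ frontier B → t = s' := by
    intro t ht hfr
    have : f t ∈ frontier B ∩ f '' Set.Icc (0:ℝ) 1 := ⟨hfr, ⟨t, ht, rfl⟩⟩
    rw [hfrB] at this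
    exact hinj this
  have hsB' : f s ∈ B := interior_subset hsB
  have hss' : s < s' := by
    rcases lt_trichotomy s s' with h | h | h
    · exact h
    · exfalso
      have : f s ∈ frontier B := by
        have : f s' ∈ frontier B ∩ f '' Set.Icc (0:ℝ) 1 := by
          rw [hfrB]; rfl
        rw [h]; exact this.1
      exact (disjoint_interior_frontier (s := B)).ne_of_mem hsB this rfl
    · exfalso
      have : f 1 ∈ B := by
        refine stay_in_of_no_frontier hc hB (K := Set.Ioc s' 1) isPreconnected_Ioc ?_ ?_ ?_ hsB'
        · intro t ht hfr
          have ht' : t ∈ Set.Icc (0:ℝ) 1 := ⟨le_trans hs'.1 (le_of_lt ht.1), ht.2⟩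
          exact absurd (hfrB' t ht' hfr) (ne_of_gt ht.1)
        · exact ⟨h, hs.2⟩
        · exact ⟨lt_of_lt_of_le h hs.2, le_refl 1⟩
      rw [hf1] at this
      exact hyB this
  have key : ∀ t ∈ Set.Ioo s s', f t ∈ B \ A := by
    intro t ht
    constructor
    · -- f t ∈ B : use K = Ico 0 s'
      refine stay_in_of_no_frontier hc hB (K := Set.Ico 0 s') isPreconnected_Ico ?_ ?_ ?_ hsB'
      · intro r hr hfr
        have hr' : r ∈ Set.Icc (0:ℝ) 1 := ⟨hr.1, le_trans (le_of_lt hr.2) hs'.2⟩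
        exact absurd (hfrB' r hr' hfr) (ne_of_lt hr.2)
      · exact ⟨hs.1, hss'⟩
      · exact ⟨le_trans hs.1 (le_of_lt ht.1), ht.2⟩
    · -- f t ∉ A : else y ∈ A via K = Ioc s 1
      intro htA
      have : f 1 ∈ A := by
        refine stay_in_of_no_frontier hc hA (K := Set.Ioc s 1) isPreconnected_Ioc ?_ ?_ ?_ htA
        · intro r hr hfr
          have hr' : r ∈ Set.Icc (0:ℝ) 1 := ⟨le_trans hs.1 (le_of_lt hr.1), hr.2⟩
          exact absurd (hfrA' r hr' hfr) (ne_of_gt hr.1)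
        · exact ⟨ht.1, le_trans (le_of_lt ht.2) hs'.2⟩
        · exact ⟨lt_of_lt_of_le hss' hs'.2, le_refl 1⟩
      rw [hf1] at this
      exact hyA this
  have hIcc : Set.Ioo s s' ⊆ Set.Icc (0:ℝ) 1 := fun t ht =>
    ⟨le_trans hs.1 (le_of_lt ht.1), le_trans (le_of_lt ht.2) hs'.2⟩
  refine ⟨hss', ?_, ?_⟩
  · intro t ht
    exact ⟨hIcc ht, Or.inr (key t ht)⟩
  · have hinf : (f '' Set.Ioo s s').Infinite :=
      (Set.Ioo_infinite hss').image (hinj.injOn)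
    refine hinf.mono ?_
    rintro z ⟨t, ht, rfl⟩
    exact ⟨⟨t, hIcc ht, rfl⟩, Or.inr (key t ht)⟩
end
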